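/- There is a well-defined K-derivation D : A_f → A_f on the binary quartic algebra A_f determined by D(r) = sr−rs, D(s) = tr−rt, D(t) = 0; i.e., these assignments on generators annihilate the defining ideal of A_f. -/

import Mathlib

/-!
A `K`-linear map `D : A → A` satisfying the Leibniz rule is the same as an algebra map
`A → A[ε]` of the form `x ↦ x + ε D x`. On the free algebra `K⟨r, s, t⟩` we get such a map
by sending each generator `g` to `g + ε D g`; it descends to `A_f` as soon as the
`ε`-component of every relator vanishes in `A_f`. These components are commutators with scalars:
`D(r²) = [s, r²]`, `D(rs + sr) = [t, r²] + [s, rs + sr]`, `D(rt + tr + s²) = [st + ts, r]`,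
`D(st + ts) = [t², r]` and `D(t²) = 0`.
-/

/-- The relations defining the algebra `A_f` associated to the binary quartic
`f = a x⁴ + b x³ z + c x² z² + d x z³ + e z⁴`: the quotient of the free algebra on
generators `r = ι 0`, `s = ι 1`, `t = ι 2` by the two-sided ideal generated by
`r²−a`, `rs+sr−b`, `rt+tr+s²−c`, `st+ts−d`, `t²−e`. -/
def bqRel (K : Type*) [Field K] (a b c d e : K) :
    FreeAlgebra K (Fin 3) → FreeAlgebra K (Fin 3) → Prop := fun x y =>
  y = 0 ∧ (
    x = FreeAlgebra.ι K 0 * FreeAlgebra.ι K 0 - algebraMap K _ a ∨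
    x = FreeAlgebra.ι K 0 * FreeAlgebra.ι K 1 + FreeAlgebra.ι K 1 * FreeAlgebra.ι K 0
        - algebraMap K _ b ∨
    x = FreeAlgebra.ι K 0 * FreeAlgebra.ι K 2 + FreeAlgebra.ι K 2 * FreeAlgebra.ι K 0
        + FreeAlgebra.ι K 1 * FreeAlgebra.ι K 1 - algebraMap K _ c ∨
    x = FreeAlgebra.ι K 1 * FreeAlgebra.ι K 2 + FreeAlgebra.ι K 2 * FreeAlgebra.ι K 1
        - algebraMap K _ d ∨
    x = FreeAlgebra.ι K 2 * FreeAlgebra.ι K 2 - algebraMap K _ e)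

/-- The algebra `A_f` associated to a binary quartic. -/
def BQAlg (K : Type*) [Field K] (a b c d e : K) := RingQuot (bqRel K a b c d e)

noncomputable instance (K : Type*) [Field K] (a b c d e : K) : Ring (BQAlg K a b c d e) :=
  inferInstanceAs (Ring (RingQuot _))

noncomputable instance (K : Type*) [Field K] (a b c d e : K) : Algebra K (BQAlg K a b c d e) :=
  inferInstanceAs (Algebra K (RingQuot _))

/-- The generator `r` of `A_f`. -/
noncomputable def bqR (K : Type*) [Field K] (a b c d e : K) : BQAlg K a b c d e :=
  RingQuot.mkAlgHom K (bqRel K a b c d e) (FreeAlgebra.ι K 0)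

/-- The generator `s` of `A_f`. -/
noncomputable def bqS (K : Type*) [Field K] (a b c d e : K) : BQAlg K a b c d e :=
  RingQuot.mkAlgHom K (bqRel K a b c d e) (FreeAlgebra.ι K 1)

/-- The generator `t` of `A_f`. -/
noncomputable def bqT (K : Type*) [Field K] (a b c d e : K) : BQAlg K a b c d e :=
  RingQuot.mkAlgHom K (bqRel K a b c d e) (FreeAlgebra.ι K 2)

open TrivSqZeroExt

namespace DualNumber
variable {R A : Type*} [CommSemiring R] [Semiring A] [Algebra R A]

theorem snd_map_mul_of_fst_map (ψ : A →ₐ[R] DualNumber A) (hψ : ∀ x, (ψ x).fst = x)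
    (x y : A) :
    (ψ (x * y)).snd = (ψ x).snd * y + x * (ψ y).snd := by
  rw [map_mul, snd_mul, hψ, hψ, add_comm]

end DualNumber

namespace FreeAlgebra
variable {R X A : Type*} [CommSemiring R] [Semiring A] [Algebra R A]

noncomputable def liftDualNumber (f m : X → A) : FreeAlgebra R X →ₐ[R] DualNumber A :=
  lift R fun i => inl (f i) + inr (m i)

theorem fst_liftDualNumber (f m : X → A) (x : FreeAlgebra R X) :
    (liftDualNumber f m x).fst = lift R f x := by
  have : (fstHom R A A).comp (liftDualNumber f m) = lift R f :=
    hom_ext <| funext fun i => by simp [liftDualNumber]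
  exact AlgHom.congr_fun this x

theorem snd_liftDualNumber_ι (f m : X → A) (i : X) :
    (liftDualNumber (R := R) f m (ι R i)).snd = m i := by
  simp [liftDualNumber]

theorem snd_liftDualNumber_algebraMap (f m : X → A) (k : R) :
    (liftDualNumber f m (algebraMap R (FreeAlgebra R X) k)).snd = 0 := by
  simp [algebraMap_eq_inl']

theorem snd_liftDualNumber_mul (f m : X → A) (x y : FreeAlgebra R X) :
    (liftDualNumber f m (x * y)).snd =
      lift R f x * (liftDualNumber f m y).snd + (liftDualNumber f m x).snd * lift R f y := by
  rw [map_mul, DualNumber.snd_mul, fst_liftDualNumber, fst_liftDualNumber]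

end FreeAlgebra

namespace RingQuot
variable {R X : Type*} [CommSemiring R] {rel : FreeAlgebra R X → FreeAlgebra R X → Prop}
open FreeAlgebra

theorem exists_derivation_of_rel (m : X → FreeAlgebra R X)
    (hm : ∀ ⦃x y⦄, rel x y →
      (liftDualNumber (mkAlgHom R rel ∘ ι R) (mkAlgHom R rel ∘ m) x).snd =
        (liftDualNumber (mkAlgHom R rel ∘ ι R) (mkAlgHom R rel ∘ m) y).snd) :
    ∃ D : RingQuot rel →ₗ[R] RingQuot rel, (∀ x y, D (x * y) = D x * y + x * D y) ∧
      ∀ i, D (mkAlgHom R rel (ι R i)) = mkAlgHom R rel (m i) := by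
  have lift_mk : FreeAlgebra.lift R (mkAlgHom R rel ∘ ι R) = mkAlgHom R rel :=
    hom_ext <| by rw [lift_comp_ι]
  let φ := liftDualNumber (R := R) (mkAlgHom R rel ∘ ι R) (mkAlgHom R rel ∘ m)
  have hφ : ∀ ⦃x y⦄, rel x y → φ x = φ y := fun x y h => by
    refine TrivSqZeroExt.ext ?_ (hm h)
    rw [fst_liftDualNumber, fst_liftDualNumber, lift_mk, mkAlgHom_rel R h]
  let ψ := liftAlgHom R ⟨φ, hφ⟩
  have hψ : ∀ x, (ψ x).fst = x := by
    have : (fstHom R _ _).comp ψ = AlgHom.id R _ := ringQuot_ext' _ _ _ <| by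
      ext i
      simp [ψ, φ, fst_liftDualNumber, lift_mk]
    exact AlgHom.congr_fun this
  refine ⟨{ toFun x := (ψ x).snd, map_add' := by simp, map_smul' := by simp },
    DualNumber.snd_map_mul_of_fst_map ψ hψ, fun i => ?_⟩
  simp [ψ, φ, snd_liftDualNumber_ι]

end RingQuot

/- Leibniz expansions of the relators `r² - a`, `rs + sr - b`, `rt + tr + s² - c`, `st + ts - d`
under `r ↦ sr - rs`, `s ↦ tr - rt`, `t ↦ 0`. -/
section QuarticRelators
variable {K A : Type*} [CommSemiring K] [Ring A] [Algebra K A] {r s t : A} {a b d e : K}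

theorem leibniz_r_sq_eq_zero (ha : r * r = algebraMap K A a) :
    r * (s * r - r * s) + (s * r - r * s) * r = 0 := by
  calc _ = s * (r * r) - r * r * s := by noncomm_ring
    _ = 0 := by rw [ha, Algebra.commutes, sub_self]

theorem leibniz_rs_add_sr_eq_zero (ha : r * r = algebraMap K A a)
    (hb : r * s + s * r = algebraMap K A b) :
    r * (t * r - r * t) + (s * r - r * s) * s + (s * (s * r - r * s) + (t * r - r * t) * r) =
      0 := by
  calc _ = t * (r * r) - r * r * t + (s * (r * s + s * r) - (r * s + s * r) * s) := by
        noncomm_ring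
    _ = 0 := by rw [ha, hb, Algebra.commutes, Algebra.commutes, sub_self, sub_self, add_zero]

theorem leibniz_rt_add_tr_add_s_sq_eq_zero (hd : s * t + t * s = algebraMap K A d) :
    (s * r - r * s) * t + t * (s * r - r * s) + (s * (t * r - r * t) + (t * r - r * t) * s) =
      0 := by
  calc _ = (s * t + t * s) * r - r * (s * t + t * s) := by noncomm_ring
    _ = 0 := by rw [hd, Algebra.commutes, sub_self]

theorem leibniz_st_add_ts_eq_zero (he : t * t = algebraMap K A e) :
    (t * r - r * t) * t + t * (t * r - r * t) = 0 := by
  calc _ = t * t * r - r * (t * t) := by noncomm_ring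
    _ = 0 := by rw [he, Algebra.commutes, sub_self]

end QuarticRelators

section BinaryQuartic
variable (K : Type*) [Field K] (a b c d e : K)
open FreeAlgebra

theorem bqR_mul_self : bqR K a b c d e * bqR K a b c d e = algebraMap K _ a := by
  have h := RingQuot.mkAlgHom_rel K (s := bqRel K a b c d e) ⟨rfl, Or.inl rfl⟩
  simp only [map_sub, map_mul, map_zero, AlgHom.commutes, sub_eq_zero] at h
  exact h

theorem bqR_mul_bqS_add_bqS_mul_bqR :
    bqR K a b c d e * bqS K a b c d e + bqS K a b c d e * bqR K a b c d e = algebraMap K _ b := by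
  have h := RingQuot.mkAlgHom_rel K (s := bqRel K a b c d e) ⟨rfl, Or.inr <| Or.inl rfl⟩
  simp only [map_sub, map_add, map_mul, map_zero, AlgHom.commutes, sub_eq_zero] at h
  exact h

theorem bqS_mul_bqT_add_bqT_mul_bqS :
    bqS K a b c d e * bqT K a b c d e + bqT K a b c d e * bqS K a b c d e = algebraMap K _ d := by
  have h := RingQuot.mkAlgHom_rel K (s := bqRel K a b c d e)
    ⟨rfl, Or.inr <| Or.inr <| Or.inr <| Or.inl rfl⟩
  simp only [map_sub, map_add, map_mul, map_zero, AlgHom.commutes, sub_eq_zero] at h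
  exact h

theorem bqT_mul_self : bqT K a b c d e * bqT K a b c d e = algebraMap K _ e := by
  have h := RingQuot.mkAlgHom_rel K (s := bqRel K a b c d e)
    ⟨rfl, Or.inr <| Or.inr <| Or.inr <| Or.inr rfl⟩
  simp only [map_sub, map_mul, map_zero, AlgHom.commutes, sub_eq_zero] at h
  exact h

noncomputable def bqDerivGen : Fin 3 → FreeAlgebra K (Fin 3) :=
  ![ι K 1 * ι K 0 - ι K 0 * ι K 1, ι K 2 * ι K 0 - ι K 0 * ι K 2, 0]

theorem bqRel_liftDualNumber_snd ⦃x y : FreeAlgebra K (Fin 3)⦄ (h : bqRel K a b c d e x y) :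
    let mk := RingQuot.mkAlgHom K (bqRel K a b c d e)
    (liftDualNumber (mk ∘ ι K) (mk ∘ bqDerivGen K) x).snd =
      (liftDualNumber (mk ∘ ι K) (mk ∘ bqDerivGen K) y).snd := by
  obtain ⟨rfl, rfl | rfl | rfl | rfl | rfl⟩ := h <;>
    simp only [map_sub, map_add, snd_sub, snd_add, snd_liftDualNumber_mul, snd_liftDualNumber_ι,
      snd_liftDualNumber_algebraMap, lift_ι_apply, Function.comp_apply, map_zero, snd_zero,
      sub_zero] <;>
    simp only [bqDerivGen, Matrix.cons_val, map_sub, map_mul, map_zero, mul_zero, zero_mul,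
      add_zero, zero_add]
  exacts [leibniz_r_sq_eq_zero (bqR_mul_self K a b c d e),
    leibniz_rs_add_sr_eq_zero (bqR_mul_self K a b c d e) (bqR_mul_bqS_add_bqS_mul_bqR K a b c d e),
    leibniz_rt_add_tr_add_s_sq_eq_zero (bqS_mul_bqT_add_bqT_mul_bqS K a b c d e),
    leibniz_st_add_ts_eq_zero (bqT_mul_self K a b c d e)]

end BinaryQuartic

theorem bq_derivation_exists_general (K : Type*) [Field K]
    (a b c d e : K) :
    ∃ D : BQAlg K a b c d e →ₗ[K] BQAlg K a b c d e,
      (∀ x y : BQAlg K a b c d e, D (x * y) = D x * y + x * D y) ∧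
      D (bqR K a b c d e) = bqS K a b c d e * bqR K a b c d e
          - bqR K a b c d e * bqS K a b c d e ∧
      D (bqS K a b c d e) = bqT K a b c d e * bqR K a b c d e
          - bqR K a b c d e * bqT K a b c d e ∧
      D (bqT K a b c d e) = 0 := by
  obtain ⟨D, hD, hgen⟩ :=
    RingQuot.exists_derivation_of_rel (bqDerivGen K) (bqRel_liftDualNumber_snd K a b c d e)
  refine ⟨D, hD, (hgen 0).trans ?_, (hgen 1).trans ?_, (hgen 2).trans ?_⟩ <;>
    simp only [bqDerivGen, Matrix.cons_val, map_sub, map_mul, map_zero] <;>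
    -- the sides differ only by the unfolding of the `BQAlg` instances to those of `RingQuot`
    rfl

/-- There is a well-defined `K`-derivation `D : A_f → A_f` on the binary quartic algebra
determined by `D r = sr − rs`, `D s = tr − rt`, `D t = 0`. -/
theorem bq_derivation_exists (K : Type*) [Field K] (h2 : (2 : K) ≠ 0) (h3 : (3 : K) ≠ 0)
    (a b c d e : K) :
    ∃ D : BQAlg K a b c d e →ₗ[K] BQAlg K a b c d e,
      (∀ x y : BQAlg K a b c d e, D (x * y) = D x * y + x * D y) ∧
      D (bqR K a b c d e) = bqS K a b c d e * bqR K a b c d e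
          - bqR K a b c d e * bqS K a b c d e ∧
      D (bqS K a b c d e) = bqT K a b c d e * bqR K a b c d e
          - bqR K a b c d e * bqT K a b c d e ∧
      D (bqT K a b c d e) = 0 :=
  bq_derivation_exists_general K a b c d e
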